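/- Two Gauss codes w and w' on n letters are unorientedly equivalent if and only if the unordered pairs {proj^LC(w), proj^LC(rev(w))} and {proj^LC(w'), proj^LC(rev(w'))} are equal. -/

import Mathlib

/-- A Gauss code on `n` letters: a bijection from the `2*n` positions to
letters paired with a side (`false` = L, `true` = R). -/
abbrev GaussCode (n : ℕ) := Fin (2 * n) ≃ Fin n × Bool

instance (n : ℕ) [NeZero n] : NeZero (2 * n) := ⟨by have := NeZero.ne n; omega⟩

namespace GaussCode

variable {n : ℕ}

/-- `π_*(w)`: relabel the letters by the permutation `π`. -/
def permAct (π : Equiv.Perm (Fin n)) (w : GaussCode n) : GaussCode n :=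
  w.trans (π.prodCongr (Equiv.refl Bool))

/-- `shift[m](w)`: the code whose entry at position `i` is the entry of `w` at
position `i + m` (mod `2n`). -/
def shift [NeZero n] (m : ℕ) (w : GaussCode n) : GaussCode n :=
  (Equiv.addRight (Fin.ofNat (2 * n) m)).trans w

/-- `rev(w)`: the code whose entry at position `i` is the entry of `w` at
position `2n - 1 - i`. -/
def rev (w : GaussCode n) : GaussCode n :=
  (Fin.revPerm).trans w

/-- A Gauss code is left preferred if its `L`-entries appear in the order
`(1,L), (2,L), …, (n,L)` and its entry at position `0` is `(1,L)`. -/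
def IsLeftPreferred [NeZero n] (w : GaussCode n) : Prop :=
  StrictMono (fun j : Fin n => w.symm (j, false)) ∧ w 0 = (0, false)

/-- `proj^LP(w)`: relabel letters in the order of appearance of their `L`-entries,
then rotate so that `(1,L)` is at position `0`. -/
def projLP [NeZero n] (w : GaussCode n) : GaussCode n :=
  let π : Equiv.Perm (Fin n) := (Tuple.sort (fun j : Fin n => w.symm (j, false)))⁻¹
  let w' := permAct π w
  shift ((w'.symm ((0 : Fin n), false)).val) w'

/-- `shift^LP(w) := proj^LP(shift[1](w))`. -/
def shiftLP [NeZero n] (w : GaussCode n) : GaussCode n :=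
  projLP (shift 1 w)

/-- `rev^LP(w) := proj^LP(rev(w))`. -/
def revLP [NeZero n] (w : GaussCode n) : GaussCode n :=
  projLP (rev w)

/-- The value of an entry in the order `(1,L) < (1,R) < (2,L) < (2,R) < …`. -/
def entryKey (e : Fin n × Bool) : ℕ :=
  2 * e.1.val + (if e.2 then 1 else 0)

/-- Lexicographic (strict) order on Gauss codes, comparing entries position by
position in the order `(1,L) < (1,R) < (2,L) < (2,R) < …`. -/
def lexLt (w w' : GaussCode n) : Prop :=
  ∃ i : Fin (2 * n), (∀ k, k < i → w k = w' k) ∧ entryKey (w i) < entryKey (w' i)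

/-- Lexicographic order on Gauss codes. -/
def lexLe (w w' : GaussCode n) : Prop :=
  w = w' ∨ lexLt w w'

/-- A left preferred Gauss code is left canonical if it is the smallest element
of its `shift^LP`-orbit `{w, shift^LP(w), …, (shift^LP)^{n-1}(w)}`. -/
def IsLeftCanonical [NeZero n] (w : GaussCode n) : Prop :=
  IsLeftPreferred w ∧ ∀ k < n, lexLe w (shiftLP^[k] w)

/-- `proj^LC(w)`: the smallest element of the `shift^LP`-orbit of `proj^LP(w)`. -/
noncomputable def projLC [NeZero n] (w : GaussCode n) : GaussCode n :=
  letI := Classical.propDecidable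
  if h : ∃ v : GaussCode n, (∃ k < n, v = shiftLP^[k] (projLP w)) ∧
      ∀ k < n, lexLe v (shiftLP^[k] (projLP w))
  then h.choose else projLP w

/-- `rev^LC(w) := proj^LC(rev(w))`. -/
noncomputable def revLC [NeZero n] (w : GaussCode n) : GaussCode n :=
  projLC (rev w)

/-- Oriented equivalence of Gauss codes: `w' = shift[m](π_*(w))` for some
permutation `π` and integer `m`. -/
def OrientedEquiv [NeZero n] (w w' : GaussCode n) : Prop :=
  ∃ (π : Equiv.Perm (Fin n)) (m : ℕ), w' = shift m (permAct π w)

/-- Unoriented equivalence: `w` is orientedly equivalent to `w'` or to `rev(w')`. -/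
def UnorientedEquiv [NeZero n] (w w' : GaussCode n) : Prop :=
  OrientedEquiv w w' ∨ OrientedEquiv w (rev w')

/-- A Gauss code is 1-reducible if two cyclically adjacent entries share the same letter. -/
def OneReducible [NeZero n] (w : GaussCode n) : Prop :=
  ∃ i : Fin (2 * n), (w i).1 = (w (i + 1)).1

/-- A Gauss code is 2-reducible (cyclically, with `L = false`, `R = true`). -/
def TwoReducible [NeZero n] (w : GaussCode n) : Prop :=
  ∃ (i i' : Fin (2 * n)) (j k : Fin n), j ≠ k ∧
    ((w i = (j, false) ∧ w (i + 1) = (k, true) ∧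
        w i' = (j, true) ∧ w (i' + 1) = (k, false)) ∨
     (w i = (j, false) ∧ w (i + 1) = (k, true) ∧
        w i' = (k, false) ∧ w (i' + 1) = (j, true)) ∨
     (w i = (j, true) ∧ w (i + 1) = (k, false) ∧
        w i' = (k, true) ∧ w (i' + 1) = (j, false)))

/-- A Gauss code is minimal if it is neither 1-reducible nor 2-reducible. -/
def IsMinimal [NeZero n] (w : GaussCode n) : Prop :=
  ¬ OneReducible w ∧ ¬ TwoReducible w

/-- `σ_w`: the involution of positions sending each position to the unique other
position carrying the same letter. -/
def sigmaMap (w : GaussCode n) : Fin (2 * n) → Fin (2 * n) :=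
  fun i => w.symm ((w i).1, !(w i).2)

/-- `h_w`: the side (`false` = L, `true` = R) of the entry at each position. -/
def hMap (w : GaussCode n) : Fin (2 * n) → Bool :=
  fun i => (w i).2

end GaussCode

/-!
`proj^LC(w)` is the lexicographically least left preferred code orientedly equivalent to `w`.
Indeed, the left preferred codes in the oriented class of `w` are the codes
`proj^LP(shift[p](w))` with `p` an `L` position of `w`, and `shift^LP` carries the code for `p`
to the code for the next `L` position, so the first `n` iterates of `shift^LP` on `proj^LP(w)`
run through the whole class. Hence `proj^LC` is a complete invariant of oriented equivalence;
as `rev` respects oriented equivalence, the pair `{proj^LC(w), proj^LC(rev(w))}` is then a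
complete invariant of unoriented equivalence.
-/

open Fin.CommRing

namespace GaussCode

variable {n : ℕ}

section Relabelling

lemma permAct_symm_apply (π : Equiv.Perm (Fin n)) (w : GaussCode n) (j : Fin n) (b : Bool) :
    (permAct π w).symm (j, b) = w.symm (π⁻¹ j, b) := rfl

lemma permAct_permAct (σ τ : Equiv.Perm (Fin n)) (w : GaussCode n) :
    permAct σ (permAct τ w) = permAct (σ * τ) w := rfl

lemma permAct_one (w : GaussCode n) : permAct 1 w = w := rfl

lemma rev_permAct (π : Equiv.Perm (Fin n)) (w : GaussCode n) :
    rev (permAct π w) = permAct π (rev w) := rfl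

lemma rev_rev (w : GaussCode n) : rev (rev w) = w :=
  Equiv.ext fun i => congrArg w i.rev_rev

variable [NeZero n]

lemma shift_apply (m : ℕ) (w : GaussCode n) (i : Fin (2 * n)) :
    shift m w i = w (i + (m : Fin (2 * n))) := rfl

lemma shift_natCast_apply (m i : ℕ) (w : GaussCode n) :
    shift m w i = w ((i + m : ℕ) : Fin (2 * n)) := by
  rw [shift_apply, Nat.cast_add]

lemma shift_symm_apply (m : ℕ) (w : GaussCode n) (e : Fin n × Bool) :
    (shift m w).symm e = w.symm e - m := by
  rw [Equiv.symm_apply_eq, shift_apply, sub_add_cancel, Equiv.apply_symm_apply]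

lemma shift_shift (a b : ℕ) (w : GaussCode n) : shift a (shift b w) = shift (a + b) w :=
  Equiv.ext fun i => by simp only [shift_apply, Nat.cast_add, add_assoc]

lemma shift_zero (w : GaussCode n) : shift 0 w = w :=
  Equiv.ext fun i => by rw [shift_apply, Nat.cast_zero, add_zero]

lemma shift_congr {a b : ℕ} (h : (a : Fin (2 * n)) = b) (w : GaussCode n) :
    shift a w = shift b w :=
  Equiv.ext fun i => by rw [shift_apply, shift_apply, h]

lemma shift_permAct (m : ℕ) (π : Equiv.Perm (Fin n)) (w : GaussCode n) :
    shift m (permAct π w) = permAct π (shift m w) := rfl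

lemma rev_shift (m : ℕ) (w : GaussCode n) :
    rev (shift m w) = shift (-(m : Fin (2 * n))).val (rev w) :=
  Equiv.ext fun i => by
    change w (i.rev + m) = w (i + ((-(m : Fin (2 * n))).val : Fin (2 * n))).rev
    rw [Fin.cast_val_eq_self, Fin.rev_add, sub_neg_eq_add]

end Relabelling

namespace OrientedEquiv

variable [NeZero n] {w w' w'' : GaussCode n}

protected lemma trans (h : OrientedEquiv w w') (h' : OrientedEquiv w' w'') :
    OrientedEquiv w w'' := by
  obtain ⟨π, m, rfl⟩ := h
  obtain ⟨π', m', rfl⟩ := h'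
  exact ⟨π' * π, m' + m, by simp only [shift_permAct, permAct_permAct, shift_shift]⟩

protected lemma symm (h : OrientedEquiv w w') : OrientedEquiv w' w := by
  obtain ⟨π, m, rfl⟩ := h
  refine ⟨π⁻¹, (-(m : Fin (2 * n))).val, ?_⟩
  have h0 : (((-(m : Fin (2 * n))).val + m : ℕ) : Fin (2 * n)) = (0 : ℕ) := by
    rw [Nat.cast_add, Fin.cast_val_eq_self, neg_add_cancel, Nat.cast_zero]
  simp only [shift_permAct, permAct_permAct, shift_shift, shift_congr h0, shift_zero,
    inv_mul_cancel, permAct_one]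

protected lemma rev (h : OrientedEquiv w w') : OrientedEquiv (rev w) (rev w') := by
  obtain ⟨π, m, rfl⟩ := h
  exact ⟨π, _, by rw [rev_shift, rev_permAct]⟩

end OrientedEquiv

lemma orientedEquiv_rev_iff [NeZero n] {w w' : GaussCode n} :
    OrientedEquiv (rev w) (rev w') ↔ OrientedEquiv w w' :=
  ⟨fun h => by simpa only [rev_rev] using h.rev, OrientedEquiv.rev⟩

section LeftPreferred

lemma strictMono_symm_permAct_sort (v : GaussCode n) :
    StrictMono fun j =>
      (permAct (Tuple.sort fun j => v.symm (j, false))⁻¹ v).symm (j, false) := by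
  have hinj : Function.Injective fun j => v.symm (j, false) :=
    fun a b h => congrArg Prod.fst (v.symm.injective h)
  simp only [permAct_symm_apply, inv_inv]
  exact (Tuple.monotone_sort _).strictMono_of_injective (hinj.comp (Tuple.sort _).injective)

variable [NeZero n]

lemma eq_one_of_isLeftPreferred_permAct {v : GaussCode n} {τ : Equiv.Perm (Fin n)}
    (hv : IsLeftPreferred v) (hτ : IsLeftPreferred (permAct τ v)) : τ = 1 := by
  have hmono : StrictMono ⇑τ⁻¹ := fun a b hab => hv.1.lt_iff_lt.mp (hτ.1 hab)
  exact inv_eq_one.mp (Equiv.ext (congrFun hmono.eq_id))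

lemma permAct_eq_permAct_of_isLeftPreferred {u : GaussCode n} {π₁ π₂ : Equiv.Perm (Fin n)}
    (h₁ : IsLeftPreferred (permAct π₁ u)) (h₂ : IsLeftPreferred (permAct π₂ u)) :
    permAct π₁ u = permAct π₂ u := by
  have h : π₂ * π₁⁻¹ = 1 :=
    eq_one_of_isLeftPreferred_permAct h₁ (by rwa [permAct_permAct, inv_mul_cancel_right])
  rw [mul_inv_eq_one.mp h]

lemma isLeftPreferred_shift_symm {u : GaussCode n} (hu : StrictMono fun j => u.symm (j, false)) :
    IsLeftPreferred (shift (u.symm (0, false)).val u) := by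
  have hle : ∀ j, u.symm (0, false) ≤ u.symm (j, false) := fun j => hu.monotone (Fin.zero_le j)
  refine ⟨fun a b hab => ?_, ?_⟩
  · have := hu hab
    simp only [shift_symm_apply, Fin.cast_val_eq_self, Fin.lt_def,
      Fin.sub_val_of_le (hle a), Fin.sub_val_of_le (hle b)] at this ⊢
    have := Fin.le_def.mp (hle a)
    omega
  · rw [shift_apply, Fin.cast_val_eq_self, zero_add, Equiv.apply_symm_apply]

lemma isLeftPreferred_projLP (v : GaussCode n) : IsLeftPreferred (projLP v) :=
  isLeftPreferred_shift_symm (strictMono_symm_permAct_sort v)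

def firstLPos (v : GaussCode n) : ℕ :=
  Nat.find (⟨(v.symm (0, false)).val, by simp⟩ : ∃ i : ℕ, (v i).2 = false)

lemma firstLPos_spec (v : GaussCode n) : (v (firstLPos v)).2 = false :=
  Nat.find_spec (p := fun i : ℕ => (v i).2 = false) _

lemma firstLPos_le (v : GaussCode n) {i : ℕ} (h : (v i).2 = false) : firstLPos v ≤ i :=
  Nat.find_min' _ h

lemma firstLPos_lt (v : GaussCode n) : firstLPos v < 2 * n :=
  (firstLPos_le v (by simp)).trans_lt (v.symm (0, false)).is_lt

lemma firstLPos_permAct (π : Equiv.Perm (Fin n)) (v : GaussCode n) :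
    firstLPos (permAct π v) = firstLPos v := rfl

lemma firstLPos_eq_zero {v : GaussCode n} (h : (v 0).2 = false) : firstLPos v = 0 :=
  (Nat.find_eq_zero _).mpr (by rwa [Nat.cast_zero])

lemma firstLPos_shift_one {v : GaussCode n} (h : (v 0).2 = true) :
    firstLPos (shift 1 v) + 1 = firstLPos v := by
  have h₂ : ∃ i : ℕ, (v (i + 1 : ℕ)).2 = false :=
    ⟨firstLPos (shift 1 v),
      by simpa only [shift_natCast_apply] using firstLPos_spec (shift 1 v)⟩
  unfold firstLPos
  rw [Nat.find_comp_succ (p := fun i : ℕ => (v i).2 = false) _ h₂ (by simpa using h)]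
  exact congrArg (· + 1) (Nat.find_congr' (by simp only [shift_natCast_apply, implies_true]))

lemma projLP_eq_shift_firstLPos (v : GaussCode n) :
    ∃ π, projLP v = shift (firstLPos v) (permAct π v) := by
  set u := permAct (Tuple.sort fun j => v.symm (j, false))⁻¹ v
  have hu := strictMono_symm_permAct_sort v
  suffices h : (u.symm (0, false)).val = firstLPos v from ⟨_, congrArg (shift · u) h⟩
  refine le_antisymm ?_ (firstLPos_le v ?_)
  · set p : Fin (2 * n) := ((firstLPos v : ℕ) : Fin (2 * n))
    have hp : p.val = firstLPos v := by simp [p, Nat.mod_eq_of_lt (firstLPos_lt v)]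
    have hup : u p = ((u p).1, false) := Prod.ext rfl (firstLPos_spec v)
    rw [← hp, ← u.symm_apply_eq.mpr hup.symm]
    exact hu.monotone (Fin.zero_le _)
  · rw [Fin.cast_val_eq_self]
    exact congrArg Prod.snd (u.apply_symm_apply (0, false))

lemma projLP_eq_of_isLeftPreferred {v : GaussCode n} {π : Equiv.Perm (Fin n)}
    (h : IsLeftPreferred (shift (firstLPos v) (permAct π v))) :
    projLP v = shift (firstLPos v) (permAct π v) := by
  obtain ⟨π', hπ'⟩ := projLP_eq_shift_firstLPos v
  have h' := isLeftPreferred_projLP v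
  rw [hπ', shift_permAct] at h' ⊢
  rw [shift_permAct] at h
  exact permAct_eq_permAct_of_isLeftPreferred h' h

lemma projLP_permAct (π : Equiv.Perm (Fin n)) (v : GaussCode n) :
    projLP (permAct π v) = projLP v := by
  obtain ⟨π', hπ'⟩ := projLP_eq_shift_firstLPos v
  have e :
      shift (firstLPos (permAct π v)) (permAct (π' * π⁻¹) (permAct π v)) = projLP v := by
    rw [hπ', firstLPos_permAct, permAct_permAct, inv_mul_cancel_right]
  rw [projLP_eq_of_isLeftPreferred (e ▸ isLeftPreferred_projLP v), e]

lemma shiftLP_projLP_of_snd_eq_false {v : GaussCode n} (h : (v 0).2 = false) :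
    shiftLP (projLP v) = projLP (shift 1 v) := by
  obtain ⟨π, hπ⟩ := projLP_eq_shift_firstLPos v
  rw [hπ, firstLPos_eq_zero h, shift_zero, shiftLP, shift_permAct, projLP_permAct]

lemma projLP_shift_one_of_snd_eq_true {v : GaussCode n} (h : (v 0).2 = true) :
    projLP (shift 1 v) = projLP v := by
  obtain ⟨π, hπ⟩ := projLP_eq_shift_firstLPos (shift 1 v)
  have e : projLP (shift 1 v) = shift (firstLPos v) (permAct π v) := by
    rw [hπ, ← shift_permAct, shift_shift, firstLPos_shift_one h]
  rw [e, projLP_eq_of_isLeftPreferred (e ▸ isLeftPreferred_projLP _)]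

lemma orientedEquiv_projLP (v : GaussCode n) : OrientedEquiv v (projLP v) :=
  let ⟨π, h⟩ := projLP_eq_shift_firstLPos v
  ⟨π, _, h⟩

lemma orientedEquiv_shiftLP (v : GaussCode n) : OrientedEquiv v (shiftLP v) :=
  OrientedEquiv.trans (w' := shift 1 v) ⟨1, 1, rfl⟩ (orientedEquiv_projLP _)

end LeftPreferred

section Orbit

variable [NeZero n]

def countL (w : GaussCode n) (p : ℕ) : ℕ :=
  ((Finset.range p).filter fun i : ℕ => (w (i : Fin (2 * n))).2 = false).card

lemma countL_succ (w : GaussCode n) (p : ℕ) :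
    countL w (p + 1) = countL w p + if (w p).2 = false then 1 else 0 := by
  simp only [countL, Finset.card_filter, Finset.sum_range_succ]

lemma countL_two_mul (w : GaussCode n) : countL w (2 * n) = n := by
  rw [countL, Finset.card_filter,
    ← Fin.sum_univ_eq_sum_range (fun i => if (w i).2 = false then 1 else 0)]
  simp only [Fin.cast_val_eq_self]
  rw [w.sum_comp fun e => if e.2 = false then 1 else 0, Fintype.sum_prod_type]
  simp

lemma countL_lt {w : GaussCode n} {p : ℕ} (hp : p < 2 * n) (hL : (w p).2 = false) :
    countL w p < n :=
  calc countL w p < countL w (p + 1) := by rw [countL_succ, if_pos hL]; omega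
    _ ≤ countL w (2 * n) := Finset.card_le_card
        (Finset.filter_subset_filter _ (Finset.range_subset_range.mpr hp))
    _ = n := countL_two_mul w

-- Passing an `L` entry costs one application of `shift^LP`, passing an `R` entry costs nothing.
lemma projLP_shift_eq_iterate (w : GaussCode n) (p : ℕ) :
    projLP (shift p w) = shiftLP^[countL w p] (projLP w) := by
  induction p with
  | zero => rw [shift_zero, countL, Finset.range_zero, Finset.filter_empty, Finset.card_empty,
      Function.iterate_zero, id]
  | succ p ih =>
    have hp : (shift p w 0).2 = (w p).2 := by rw [shift_apply, zero_add]
    rw [countL_succ, add_comm p, ← shift_shift]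
    cases h : (w p).2
    · rw [if_pos rfl, Function.iterate_succ_apply', ← ih,
        shiftLP_projLP_of_snd_eq_false (hp.trans h)]
    · rw [if_neg (by decide), add_zero, ← ih,
        projLP_shift_one_of_snd_eq_true (hp.trans h)]

lemma exists_iterate_eq_iff (w v : GaussCode n) :
    (∃ k < n, v = shiftLP^[k] (projLP w)) ↔ OrientedEquiv w v ∧ IsLeftPreferred v := by
  constructor
  · rintro ⟨k, -, rfl⟩
    induction k with
    | zero => exact ⟨orientedEquiv_projLP w, isLeftPreferred_projLP w⟩
    | succ k ih =>
      rw [Function.iterate_succ_apply']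
      exact ⟨ih.1.trans (orientedEquiv_shiftLP _), isLeftPreferred_projLP _⟩
  · rintro ⟨⟨π, m, rfl⟩, hv⟩
    set p := (m : Fin (2 * n)).val
    rw [shift_congr (b := p) (Fin.cast_val_eq_self _).symm, shift_permAct] at hv ⊢
    have hL : (w p).2 = false := by
      have h0 : (shift p w 0).2 = false := congrArg Prod.snd hv.2
      rwa [shift_apply, zero_add] at h0
    refine ⟨countL w p, countL_lt (Fin.is_lt _) hL, ?_⟩
    obtain ⟨π', hπ'⟩ := projLP_eq_shift_firstLPos (shift p w)
    rw [firstLPos_eq_zero (by rwa [shift_apply, zero_add]), shift_zero] at hπ'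
    rw [← projLP_shift_eq_iterate, hπ']
    exact permAct_eq_permAct_of_isLeftPreferred hv (hπ' ▸ isLeftPreferred_projLP _)

end Orbit

lemma entryKey_injective : Function.Injective (entryKey (n := n)) := by
  rintro ⟨a, b⟩ ⟨c, d⟩ h
  simp only [entryKey] at h
  cases b <;> cases d <;> simp only [Bool.false_eq_true, if_true, if_false] at h <;>
    first | omega | exact congrArg (·, _) (Fin.ext (by omega))

lemma lexLe_iff (w w' : GaussCode n) :
    lexLe w w' ↔ toLex (entryKey ∘ w) ≤ toLex (entryKey ∘ w') := by
  have hkey : ∀ i, entryKey (w i) = entryKey (w' i) ↔ w i = w' i :=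
    fun i => entryKey_injective.eq_iff
  rw [le_iff_eq_or_lt, lexLe, toLex_inj, (entryKey_injective.comp_left).eq_iff,
    DFunLike.coe_fn_eq]
  refine or_congr Iff.rfl ?_
  simp only [lexLt, ← hkey]
  rfl

lemma lexLe_antisymm {w w' : GaussCode n} (h : lexLe w w') (h' : lexLe w' w) : w = w' := by
  rw [lexLe_iff] at h h'
  exact DFunLike.coe_fn_eq.mp (entryKey_injective.comp_left (toLex_inj.mp (le_antisymm h h')))

lemma exists_lexLe_forall (f : ℕ → GaussCode n) {N : ℕ} (hN : 0 < N) :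
    ∃ k < N, ∀ j < N, lexLe (f k) (f j) := by
  obtain ⟨k, hk, hmin⟩ :=
    (Finset.range N).exists_min_image (fun k => toLex (entryKey ∘ f k)) ⟨0, by simpa⟩
  exact ⟨k, by simpa using hk, fun j hj => (lexLe_iff _ _).mpr (hmin j (by simpa using hj))⟩

section Canonical

variable [NeZero n]

lemma projLC_spec (w : GaussCode n) :
    (∃ k < n, projLC w = shiftLP^[k] (projLP w)) ∧
      ∀ k < n, lexLe (projLC w) (shiftLP^[k] (projLP w)) := by
  have h : ∃ v : GaussCode n, (∃ k < n, v = shiftLP^[k] (projLP w)) ∧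
      ∀ k < n, lexLe v (shiftLP^[k] (projLP w)) :=
    let ⟨k, hk, hmin⟩ := exists_lexLe_forall (fun k => shiftLP^[k] (projLP w)) (NeZero.pos n)
    ⟨_, ⟨k, hk, rfl⟩, hmin⟩
  rw [projLC, dif_pos h]
  exact h.choose_spec

lemma orientedEquiv_projLC (w : GaussCode n) : OrientedEquiv w (projLC w) :=
  ((exists_iterate_eq_iff w _).mp (projLC_spec w).1).1

lemma projLC_lexLe {w v : GaussCode n} (h : OrientedEquiv w v) (hv : IsLeftPreferred v) :
    lexLe (projLC w) v := by
  obtain ⟨k, hk, rfl⟩ := (exists_iterate_eq_iff w v).mpr ⟨h, hv⟩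
  exact (projLC_spec w).2 k hk

lemma isLeftPreferred_projLC (w : GaussCode n) : IsLeftPreferred (projLC w) :=
  ((exists_iterate_eq_iff w _).mp (projLC_spec w).1).2

lemma projLC_eq_projLC_iff {w w' : GaussCode n} : projLC w = projLC w' ↔ OrientedEquiv w w' := by
  refine ⟨fun h => (orientedEquiv_projLC w).trans (h ▸ (orientedEquiv_projLC w').symm),
    fun h => lexLe_antisymm ?_ ?_⟩
  · exact projLC_lexLe (h.trans (orientedEquiv_projLC w')) (isLeftPreferred_projLC w')
  · exact projLC_lexLe (h.symm.trans (orientedEquiv_projLC w)) (isLeftPreferred_projLC w)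

lemma projLC_rev_eq_projLC_rev_iff {w w' : GaussCode n} :
    projLC (rev w) = projLC (rev w') ↔ projLC w = projLC w' := by
  rw [projLC_eq_projLC_iff, projLC_eq_projLC_iff, orientedEquiv_rev_iff]

end Canonical

end GaussCode

open GaussCode in
/-- two Gauss codes are unorientedly equivalent iff the unordered
pairs `{proj^LC(w), proj^LC(rev(w))}` and `{proj^LC(w'), proj^LC(rev(w'))}` coincide. -/
theorem stmt10 (n : ℕ) [NeZero n] (w w' : GaussCode n) :
    UnorientedEquiv w w' ↔
      ({projLC w, projLC (rev w)} : Set (GaussCode n)) =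
        {projLC w', projLC (rev w')} := by
  have hswap : projLC (rev w) = projLC w' ↔ projLC w = projLC (rev w') := by
    simpa only [rev_rev] using projLC_rev_eq_projLC_rev_iff (w := w) (w' := rev w')
  rw [Set.pair_eq_pair_iff, projLC_rev_eq_projLC_rev_iff, hswap, UnorientedEquiv,
    projLC_eq_projLC_iff, projLC_eq_projLC_iff]
  tauto
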